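/- arXiv:2407.06417 — 4 statements merged into one kernel-verified Lean document; each statement's English description precedes it below -/
import Mathlib

section
/- If the set of free states F(A) ⊆ D(A) is not closed under affine combinations (i.e., there exist free states σ^a and real coefficients t_a summing to 1 such that Σ_a t_a σ^a is a state but not free), then there exists no linear map Δ on D(A) that maps every state to a free state and fixes every free state. -/
open Matrix BigOperators ComplexOrder

noncomputable section

/-- Density operator: positive semidefinite with unit trace. -/
def IsDensity {n : Type*} [Fintype n] [DecidableEq n] (ρ : Matrix n n ℂ) : Prop :=
  ρ.PosSemidef ∧ ρ.trace = 1

/-- if the set of free states is not closed under affine combinations,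
then no linear resource-destroying map exists. -/
theorem no_RD_map_for_nonaffine {d : ℕ} (F : Set (Matrix (Fin d) (Fin d) ℂ))
    (hFD : ∀ σ ∈ F, IsDensity σ)
    (hnonaffine : ∃ (k : ℕ) (σ : Fin k → Matrix (Fin d) (Fin d) ℂ) (t : Fin k → ℝ),
      (∀ a, σ a ∈ F) ∧ (∑ a, t a = 1) ∧
      IsDensity (∑ a, t a • σ a) ∧ (∑ a, t a • σ a) ∉ F) :
    ¬ ∃ Δ : Matrix (Fin d) (Fin d) ℂ →ₗ[ℝ] Matrix (Fin d) (Fin d) ℂ,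
      (∀ ρ, IsDensity ρ → Δ ρ ∈ F) ∧ (∀ σ ∈ F, Δ σ = σ) := by
  rintro ⟨Δ, hfree, hfix⟩
  obtain ⟨k, σ, t, hσ, _, hdens, hnot⟩ := hnonaffine
  have : Δ (∑ a, t a • σ a) = ∑ a, t a • σ a := by
    rw [map_sum]
    exact Finset.sum_congr rfl fun a _ => by rw [LinearMap.map_smul, hfix _ (hσ a)]
  exact hnot (this ▸ hfree _ hdens)
end
end

section
/- If the set of free states F(A) is nonconvex (there exist free states σ^a and probabilities p_a with Σ_a p_a σ^a not free), then there exists no conditional resource-destroying channel for F(A): i.e., no quantum channel Δ: D(M⊗A) → D(A) satisfying (iii) Δ(ρ) ∈ F(A) for all ρ ∈ D(M⊗A) and (iv) Δ(|m_σ⟩⟨m_σ| ⊗ σ) = σ for all σ ∈ F(A), where |m_σ⟩ are orthonormal description states with ⟨m_σ|m_{σ'}⟩ = δ_{σσ'}. -/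
/-!
Tagging each free state `σ` with its description, `|m_σ⟩⟨m_σ| ⊗ σ`, gives a density matrix on
which the channel returns `σ`. A convex mixture of tagged free states is again a density matrix,
so the channel must send it to a free state; by linearity that image is the same mixture of the
untagged states, which by nonconvexity can be chosen not free.
-/

open Matrix BigOperators ComplexOrder Kronecker

noncomputable section

/-- Outer product |v⟩⟨v| as a matrix. -/
def outer {n : Type*} (v : n → ℂ) : Matrix n n ℂ := fun i j => v i * star (v j)

theorem isDensity_outer {n : Type*} [Fintype n] [DecidableEq n] {v : n → ℂ}
    (hv : ∑ i, star (v i) * v i = 1) : IsDensity (outer v) :=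
  ⟨posSemidef_vecMulVec_self_star v, by
    simpa [outer, trace, dotProduct, mul_comm] using hv⟩

theorem IsDensity.kronecker {m n : Type*} [Fintype m] [DecidableEq m] [Fintype n] [DecidableEq n]
    {A : Matrix m m ℂ} {B : Matrix n n ℂ} (hA : IsDensity A) (hB : IsDensity B) :
    IsDensity (A ⊗ₖ B) :=
  ⟨hA.1.kronecker hB.1, by rw [trace_kronecker, hA.2, hB.2, one_mul]⟩

theorem convex_setOf_isDensity {n : Type*} [Fintype n] [DecidableEq n] :
    Convex ℝ {ρ : Matrix n n ℂ | IsDensity ρ} := by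
  intro ρ hρ τ hτ a b ha hb hab
  refine ⟨(hρ.1.smul ha).add (hτ.1.smul hb), ?_⟩
  rw [trace_add, trace_smul, trace_smul, hρ.2, hτ.2]
  simp [← Complex.ofReal_add, hab]

/-- if the set of free states is nonconvex, then no conditional
resource-destroying channel exists.  `M` is the description space; each free state `σ`
has an orthonormal description vector `m σ`, with distinct free states having
orthogonal descriptions. -/
theorem no_conditional_RD_channel_for_nonconvex {d : ℕ} {M : Type*} [Fintype M] [DecidableEq M]
    (F : Set (Matrix (Fin d) (Fin d) ℂ))
    (hFD : ∀ σ ∈ F, IsDensity σ)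
    (m : {σ // σ ∈ F} → M → ℂ)
    (horth : ∀ σ τ : {σ // σ ∈ F},
      (∑ i, star (m σ i) * m τ i) = if σ = τ then (1 : ℂ) else 0)
    (hnonconvex : ∃ (k : ℕ) (σ : Fin k → Matrix (Fin d) (Fin d) ℂ) (p : Fin k → ℝ),
      (∀ a, σ a ∈ F) ∧ (∀ a, 0 ≤ p a) ∧ (∑ a, p a = 1) ∧ (∑ a, p a • σ a) ∉ F) :
    ¬ ∃ Δ : Matrix (M × Fin d) (M × Fin d) ℂ →ₗ[ℝ] Matrix (Fin d) (Fin d) ℂ,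
      (∀ ρ, IsDensity ρ → Δ ρ ∈ F) ∧
      (∀ σ (h : σ ∈ F), Δ (outer (m ⟨σ, h⟩) ⊗ₖ σ) = σ) := by
  rintro ⟨Δ, hΔfree, hΔfix⟩
  obtain ⟨k, σ, p, hσ, hp, hp1, hmix⟩ := hnonconvex
  let tagged a := outer (m ⟨σ a, hσ a⟩) ⊗ₖ σ a
  have htagged a : IsDensity (tagged a) :=
    (isDensity_outer (by simpa using horth ⟨σ a, hσ a⟩ ⟨σ a, hσ a⟩)).kronecker (hFD _ (hσ a))
  have hdensity : IsDensity (∑ a, p a • tagged a) :=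
    convex_setOf_isDensity.sum_mem (fun a _ => hp a) hp1 (fun a _ => htagged a)
  have hΔmix : Δ (∑ a, p a • tagged a) = ∑ a, p a • σ a := by
    simp only [map_sum, map_smul, tagged, hΔfix]
  exact hmix (hΔmix ▸ hΔfree _ hdensity)
end
end

section
/- If F(A_1), ..., F(A_N) are affine sets of free states, Δ^{(a)} are conditional RD channels for each F(A_a) (of the measure-and-prepare form Δ^{(a)} = Σ_m ⟨m|·|m⟩ ⊗ Δ^{(a)}_m with each Δ^{(a)}_m mapping all states into F(A_a)), and the composite free set is F(A_1…A_N) = Aff(F(A_1)⊗…⊗F(A_N)) ∩ D(A_1…A_N), then for every joint state ρ ∈ D(M_1 A_1 … M_N A_N), (Δ^{(1)} ⊗ … ⊗ Δ^{(N)})(ρ) ∈ F(B_1…B_N). (Unbreakability of censorship for affine QRTs.) -/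
open Matrix BigOperators ComplexOrder

noncomputable section

/-- Kronecker product of `N` local matrices, on the composite index `∀ a, I a`. -/
def prodMat {N : ℕ} {I : Fin N → Type*} (ω : ∀ a, Matrix (I a) (I a) ℂ) :
    Matrix (∀ a, I a) (∀ a, I a) ℂ :=
  Matrix.of fun s t => ∏ a, ω a (s a) (t a)

/-- The tensor product `L_1 ⊗ ⋯ ⊗ L_N` of linear maps on matrix spaces, applied to a
joint matrix (defined via the expansion in matrix units). -/
def tensorApply {N : ℕ} {I O : Fin N → Type*}
    [∀ a, Fintype (I a)] [∀ a, DecidableEq (I a)]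
    (L : ∀ a, Matrix (I a) (I a) ℂ →ₗ[ℂ] Matrix (O a) (O a) ℂ)
    (X : Matrix (∀ a, I a) (∀ a, I a) ℂ) : Matrix (∀ a, O a) (∀ a, O a) ℂ :=
  Matrix.of fun s' t' => ∑ s, ∑ t, X s t *
    ∏ a, (L a (Matrix.single (s a) (t a) 1)) (s' a) (t' a)

/-- The conditional channel `Δ = Σ_m ⟨m|·|m⟩ ⊗ Δ_m`, tensored over the `N` parties:
a projective measurement of all description registers followed by the conditioned
local channels. -/
def condTensor {N : ℕ} {dM dA : Fin N → ℕ}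
    (L : ∀ a, Fin (dM a) →
      (Matrix (Fin (dA a)) (Fin (dA a)) ℂ →ₗ[ℂ] Matrix (Fin (dA a)) (Fin (dA a)) ℂ))
    (ρ : Matrix ((∀ a, Fin (dM a)) × (∀ a, Fin (dA a)))
      ((∀ a, Fin (dM a)) × (∀ a, Fin (dA a))) ℂ) :
    Matrix (∀ a, Fin (dA a)) (∀ a, Fin (dA a)) ℂ :=
  ∑ m : ∀ a, Fin (dM a),
    tensorApply (fun a => L a (m a)) (Matrix.of fun s t => ρ (m, s) (m, t))

/-- Choi matrix of a linear map on matrices; positive semidefiniteness of the Choi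
matrix is equivalent to complete positivity. -/
def choi {n m : Type*} [Fintype n] [DecidableEq n]
    (L : Matrix n n ℂ →ₗ[ℂ] Matrix m m ℂ) : Matrix (n × m) (n × m) ℂ :=
  Matrix.of fun p q => (L (Matrix.single p.1 q.1 1)) p.2 q.2

/-!
Matrix units are complex combinations of density matrices, so a conditioned local channel, which
sends every state into `F a`, sends every matrix into the complex span of `F a`. Expanding the
joint state in product matrix units therefore puts the output of the censorship into the complex
span of products of free states. The output is itself a state (Kraus form of the completely
positive local maps, trace preservation), so it is Hermitian of trace one; as the spanning
products are too, replacing the coefficients by their real parts gives an affine combination.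
-/

lemma matrix_eq_sum_smul_single {n R : Type*} [Fintype n] [DecidableEq n] [Semiring R]
    (X : Matrix n n R) : X = ∑ i, ∑ j, X i j • single i j 1 := by
  simpa using matrix_eq_sum_single X

section ProdMat

variable {N : ℕ} {I : Fin N → Type*}

lemma trace_prodMat [∀ a, Fintype (I a)] (ω : ∀ a, Matrix (I a) (I a) ℂ) :
    (prodMat ω).trace = ∏ a, (ω a).trace := by
  simp only [trace, diag, prodMat, of_apply, Finset.prod_univ_sum, Fintype.piFinset_univ]

lemma conjTranspose_prodMat (ω : ∀ a, Matrix (I a) (I a) ℂ) :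
    (prodMat ω)ᴴ = prodMat fun a => (ω a)ᴴ := by
  ext s t
  simp [prodMat, star_prod]

lemma isHermitian_prodMat {ω : ∀ a, Matrix (I a) (I a) ℂ} (hω : ∀ a, (ω a).IsHermitian) :
    (prodMat ω).IsHermitian := by
  rw [IsHermitian, conjTranspose_prodMat]
  simp only [(hω _).eq]

lemma prodMat_mul [∀ a, Fintype (I a)] (ω ω' : ∀ a, Matrix (I a) (I a) ℂ) :
    prodMat ω * prodMat ω' = prodMat fun a => ω a * ω' a := by
  ext s t
  simp only [mul_apply, prodMat, of_apply, Finset.prod_univ_sum, Fintype.piFinset_univ,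
    Finset.prod_mul_distrib]

lemma prodMat_smul (c : Fin N → ℂ) (ω : ∀ a, Matrix (I a) (I a) ℂ) :
    (prodMat fun a => c a • ω a) = (∏ a, c a) • prodMat ω := by
  ext s t
  simp [prodMat, Finset.prod_mul_distrib]

lemma prodMat_sum {J : Fin N → Type*} [∀ a, Fintype (J a)]
    (ω : ∀ a, J a → Matrix (I a) (I a) ℂ) :
    (prodMat fun a => ∑ j, ω a j) = ∑ r : ∀ a, J a, prodMat fun a => ω a (r a) := by
  ext s t
  simp only [prodMat, of_apply, Matrix.sum_apply, Finset.prod_univ_sum, Fintype.piFinset_univ]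

lemma prodMat_single [∀ a, DecidableEq (I a)] (s t : ∀ a, I a) :
    (prodMat fun a => single (s a) (t a) (1 : ℂ)) = single s t 1 := by
  ext u v
  simp [prodMat, single, Finset.prod_boole, funext_iff, forall_and]

lemma prodMat_mem_span {S : ∀ a, Set (Matrix (I a) (I a) ℂ)} {ω : ∀ a, Matrix (I a) (I a) ℂ}
    (hω : ∀ a, ω a ∈ Submodule.span ℂ (S a)) :
    prodMat ω ∈ Submodule.span ℂ (prodMat '' Set.univ.pi S) := by
  choose k c σ hσ using fun a => Submodule.mem_span_set'.mp (hω a)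
  have hω_eq : ω = fun a => ∑ i, c a i • (σ a i : Matrix (I a) (I a) ℂ) :=
    funext fun a => (hσ a).symm
  rw [hω_eq, prodMat_sum]
  refine Submodule.sum_mem _ fun r _ => ?_
  rw [prodMat_smul]
  exact Submodule.smul_mem _ _ (Submodule.subset_span ⟨_, fun a _ => (σ a (r a)).2, rfl⟩)

end ProdMat

section Density

variable {n : Type*} [Fintype n] [DecidableEq n]

lemma Matrix.PosSemidef.mem_span_isDensity {A : Matrix n n ℂ} (hA : A.PosSemidef) :
    A ∈ Submodule.span ℂ {σ | IsDensity σ} := by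
  by_cases h : A.trace = 0
  · rw [hA.trace_eq_zero_iff.mp h]
    exact Submodule.zero_mem _
  · have hσ : IsDensity (A.trace⁻¹ • A) :=
      ⟨hA.smul (inv_nonneg.mpr hA.trace_nonneg), by rw [trace_smul, smul_eq_mul, inv_mul_cancel₀ h]⟩
    have hmem : A.trace⁻¹ • A ∈ Submodule.span ℂ {σ | IsDensity σ} := Submodule.subset_span hσ
    simpa [smul_smul, mul_inv_cancel₀ h] using Submodule.smul_mem _ A.trace hmem

lemma vecMulVec_star_mem_span_isDensity (v : n → ℂ) :
    vecMulVec v (star v) ∈ Submodule.span ℂ {σ | IsDensity σ} :=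
  (posSemidef_vecMulVec_self_star v).mem_span_isDensity

lemma single_mem_span_isDensity (s t : n) :
    single s t (1 : ℂ) ∈ Submodule.span ℂ {σ | IsDensity σ} := by
  have hdiag : ∀ u : n, single u u (1 : ℂ) = vecMulVec (Pi.single u 1) (star (Pi.single u 1)) := by
    intro u
    rw [← Pi.single_star, star_one, single_eq_single_vecMulVec_single]
  by_cases hst : s = t
  · rw [hst, hdiag]
    exact vecMulVec_star_mem_span_isDensity _
  set v : n → ℂ := Pi.single s 1 + Pi.single t 1
  set w : n → ℂ := Pi.single s 1 + Complex.I • Pi.single t 1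
  have key : single s t (1 : ℂ) = (2 : ℂ)⁻¹ • vecMulVec v (star v)
      + (Complex.I / 2) • vecMulVec w (star w)
      - ((1 + Complex.I) / 2) • (single s s 1 + single t t 1) := by
    simp only [v, w, vecMulVec_add, add_vecMulVec, star_add, star_smul, ← Pi.single_star,
      star_one, vecMulVec_smul, smul_vecMulVec, ← single_eq_single_vecMulVec_single,
      Complex.star_def, Complex.conj_I]
    match_scalars
    · linear_combination (1 / 2 : ℂ) * Complex.I_sq
    · ring
    · linear_combination (-1 / 2 : ℂ) * Complex.I_sq
    · linear_combination (Complex.I / 2) * Complex.I_sq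
  rw [key]
  refine Submodule.sub_mem _ (Submodule.add_mem _ ?_ ?_)
    (Submodule.smul_mem _ _ (Submodule.add_mem _ ?_ ?_))
  · exact Submodule.smul_mem _ _ (vecMulVec_star_mem_span_isDensity v)
  · exact Submodule.smul_mem _ _ (vecMulVec_star_mem_span_isDensity w)
  · exact hdiag s ▸ vecMulVec_star_mem_span_isDensity _
  · exact hdiag t ▸ vecMulVec_star_mem_span_isDensity _

lemma span_isDensity_eq_top : Submodule.span ℂ {σ : Matrix n n ℂ | IsDensity σ} = ⊤ := by
  refine Submodule.eq_top_iff'.mpr fun X => ?_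
  rw [matrix_eq_sum_smul_single X]
  exact Submodule.sum_mem _ fun s _ => Submodule.sum_mem _ fun t _ =>
    Submodule.smul_mem _ _ (single_mem_span_isDensity s t)

lemma LinearMap.apply_mem_span_of_mapsTo_isDensity {n m : Type*} [Fintype n] [DecidableEq n]
    {f : Matrix n n ℂ →ₗ[ℂ] Matrix m m ℂ} {S : Set (Matrix m m ℂ)}
    (hf : Set.MapsTo f {σ | IsDensity σ} S) (X : Matrix n n ℂ) :
    f X ∈ Submodule.span ℂ S := by
  have hX : X ∈ Submodule.span ℂ {σ : Matrix n n ℂ | IsDensity σ} := by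
    rw [span_isDensity_eq_top]
    trivial
  refine Submodule.span_mono hf.image_subset ?_
  rw [Submodule.span_image]
  exact Submodule.mem_map_of_mem hX

end Density

lemma exists_kraus_of_posSemidef_choi {n m : Type*} [Fintype n] [DecidableEq n] [Fintype m]
    [DecidableEq m] {L : Matrix n n ℂ →ₗ[ℂ] Matrix m m ℂ} (hL : (choi L).PosSemidef) :
    ∃ K : n × m → Matrix m n ℂ, ∀ X, L X = ∑ i, K i * X * (K i)ᴴ := by
  open scoped MatrixOrder in
  obtain ⟨B, hB⟩ := CStarAlgebra.nonneg_iff_eq_star_mul_self.mp hL.nonneg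
  -- The rows of `B`, reshaped into `m × n` matrices, are Kraus operators of `L`.
  refine ⟨fun i => of fun s' s => star (B i (s, s')), fun X => ?_⟩
  have hunit : ∀ s t s' t', L (single s t 1) s' t' = ∑ i, star (B i (s, s')) * B i (t, t') := by
    intro s t s' t'
    change choi L (s, s') (t, t') = _
    simp [hB, mul_apply]
  ext s' t'
  conv_lhs => rw [matrix_eq_sum_smul_single X]
  simp only [map_sum, map_smul, Matrix.sum_apply, Matrix.smul_apply, hunit, mul_apply,
    conjTranspose_apply, of_apply, smul_eq_mul, star_star, Finset.mul_sum, Finset.sum_mul]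
  conv_lhs => enter [2, s]; rw [Finset.sum_comm]
  conv_rhs => enter [2, i]; rw [Finset.sum_comm]
  rw [Finset.sum_comm]
  refine Finset.sum_congr rfl fun i _ => Finset.sum_congr rfl fun s _ =>
    Finset.sum_congr rfl fun t _ => ?_
  ring

section TensorApply

variable {N : ℕ} {I O : Fin N → Type*} [∀ a, Fintype (I a)] [∀ a, DecidableEq (I a)]

lemma tensorApply_eq_sum (L : ∀ a, Matrix (I a) (I a) ℂ →ₗ[ℂ] Matrix (O a) (O a) ℂ)
    (X : Matrix (∀ a, I a) (∀ a, I a) ℂ) :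
    tensorApply L X = ∑ s, ∑ t, X s t • prodMat fun a => L a (single (s a) (t a) 1) := by
  ext u v
  simp [tensorApply, prodMat, Matrix.sum_apply]

lemma trace_tensorApply [∀ a, Fintype (O a)]
    {L : ∀ a, Matrix (I a) (I a) ℂ →ₗ[ℂ] Matrix (O a) (O a) ℂ}
    (hTP : ∀ a X, (L a X).trace = X.trace) (X : Matrix (∀ a, I a) (∀ a, I a) ℂ) :
    (tensorApply L X).trace = X.trace := by
  conv_rhs => rw [matrix_eq_sum_smul_single X]
  simp only [tensorApply_eq_sum, trace_sum]
  refine Finset.sum_congr rfl fun s _ => Finset.sum_congr rfl fun t _ => ?_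
  simp only [trace_smul, trace_prodMat, hTP]
  rw [← trace_prodMat, prodMat_single]

lemma tensorApply_posSemidef {L : ∀ a, Matrix (I a) (I a) ℂ →ₗ[ℂ] Matrix (I a) (I a) ℂ}
    (hCP : ∀ a, (choi (L a)).PosSemidef) {X : Matrix (∀ a, I a) (∀ a, I a) ℂ}
    (hX : X.PosSemidef) : (tensorApply L X).PosSemidef := by
  choose K hK using fun a => exists_kraus_of_posSemidef_choi (hCP a)
  have hkraus : tensorApply L X =
      ∑ r : ∀ a, I a × I a, prodMat (fun a => K a (r a)) * X * (prodMat fun a => K a (r a))ᴴ := by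
    conv_rhs => rw [matrix_eq_sum_smul_single X]
    simp only [tensorApply_eq_sum, hK, prodMat_sum, Finset.mul_sum, Finset.sum_mul, mul_smul_comm,
      smul_mul_assoc, ← prodMat_single, conjTranspose_prodMat, prodMat_mul, Finset.smul_sum]
    conv_lhs => enter [2, s]; rw [Finset.sum_comm]
    exact Finset.sum_comm
  rw [hkraus]
  exact posSemidef_sum _ fun r _ => hX.mul_mul_conjTranspose_same _

lemma tensorApply_mem_span {L : ∀ a, Matrix (I a) (I a) ℂ →ₗ[ℂ] Matrix (O a) (O a) ℂ}
    {S : ∀ a, Set (Matrix (O a) (O a) ℂ)}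
    (hL : ∀ a, Set.MapsTo (L a) {σ | IsDensity σ} (S a)) (X : Matrix (∀ a, I a) (∀ a, I a) ℂ) :
    tensorApply L X ∈ Submodule.span ℂ (prodMat '' Set.univ.pi S) := by
  rw [tensorApply_eq_sum]
  exact Submodule.sum_mem _ fun s _ => Submodule.sum_mem _ fun t _ => Submodule.smul_mem _ _
    (prodMat_mem_span fun a => (L a).apply_mem_span_of_mapsTo_isDensity (hL a) _)

end TensorApply

lemma exists_real_affine_combination_of_mem_span {n : Type*} [Fintype n]
    {T : Set (Matrix n n ℂ)} (hT : ∀ σ ∈ T, σ.IsHermitian ∧ σ.trace = 1) {M : Matrix n n ℂ}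
    (hM : M.IsHermitian) (hMtr : M.trace = 1) (hspan : M ∈ Submodule.span ℂ T) :
    ∃ (k : ℕ) (t : Fin k → ℝ) (σ : Fin k → Matrix n n ℂ),
      (∑ b, t b = 1) ∧ (∀ b, σ b ∈ T) ∧ M = ∑ b, t b • σ b := by
  obtain ⟨k, c, σ, hc⟩ := Submodule.mem_span_set'.mp hspan
  have hconj : M = ∑ b, star (c b) • (σ b : Matrix n n ℂ) := by
    conv_lhs => rw [← hM.eq, ← hc]
    simp only [conjTranspose_sum, conjTranspose_smul, (hT _ (σ _).2).1.eq]
  have hre : M = ∑ b, (c b).re • (σ b : Matrix n n ℂ) := by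
    have hb : ∀ b, (c b).re • (σ b : Matrix n n ℂ)
        = (2 : ℂ)⁻¹ • (c b • σ b + star (c b) • σ b) := by
      intro b
      rw [← add_smul, smul_smul, ← Complex.coe_smul, Complex.re_eq_add_conj, div_eq_inv_mul]
      rfl
    rw [Finset.sum_congr rfl fun b _ => hb b, ← Finset.smul_sum, Finset.sum_add_distrib, hc,
      ← hconj, ← two_smul ℂ M, smul_smul, inv_mul_cancel₀ two_ne_zero, one_smul]
  refine ⟨k, fun b => (c b).re, fun b => σ b, ?_, fun b => (σ b).2, hre⟩
  have htr := hMtr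
  rw [hre, trace_sum] at htr
  simp only [trace_smul, (hT _ (σ _).2).2, Complex.real_smul, mul_one] at htr
  exact_mod_cast htr

section CondTensor

variable {N : ℕ} {dM dA : Fin N → ℕ}
  {L : ∀ a, Fin (dM a) →
    (Matrix (Fin (dA a)) (Fin (dA a)) ℂ →ₗ[ℂ] Matrix (Fin (dA a)) (Fin (dA a)) ℂ)}

lemma isDensity_condTensor (hCP : ∀ a m, (choi (L a m)).PosSemidef)
    (hTP : ∀ a m X, (L a m X).trace = X.trace)
    {ρ : Matrix ((∀ a, Fin (dM a)) × (∀ a, Fin (dA a))) ((∀ a, Fin (dM a)) × (∀ a, Fin (dA a))) ℂ}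
    (hρ : IsDensity ρ) : IsDensity (condTensor L ρ) := by
  refine ⟨posSemidef_sum _ fun m _ => tensorApply_posSemidef (fun a => hCP a (m a))
    (hρ.1.submatrix fun s => (m, s)), ?_⟩
  calc (condTensor L ρ).trace = ∑ m, ∑ s, ρ (m, s) (m, s) := by
        rw [condTensor, trace_sum]
        exact Finset.sum_congr rfl fun m _ => trace_tensorApply (fun a => hTP a (m a)) _
    _ = ρ.trace := by simp only [trace, diag, Fintype.sum_prod_type]
    _ = 1 := hρ.2

lemma condTensor_mem_span {F : ∀ a, Set (Matrix (Fin (dA a)) (Fin (dA a)) ℂ)}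
    (hRD : ∀ a m, Set.MapsTo (L a m) {σ | IsDensity σ} (F a))
    (ρ : Matrix ((∀ a, Fin (dM a)) × (∀ a, Fin (dA a))) ((∀ a, Fin (dM a)) × (∀ a, Fin (dA a))) ℂ) :
    condTensor L ρ ∈ Submodule.span ℂ (prodMat '' Set.univ.pi F) :=
  Submodule.sum_mem _ fun m _ => tensorApply_mem_span (fun a => hRD a (m a)) _

end CondTensor

theorem censorship_unbreakable_affine_general {N : ℕ} {dM dA : Fin N → ℕ}
    (F : ∀ a, Set (Matrix (Fin (dA a)) (Fin (dA a)) ℂ))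
    (hFD : ∀ a, ∀ σ ∈ F a, IsDensity σ)
    (L : ∀ a, Fin (dM a) →
      (Matrix (Fin (dA a)) (Fin (dA a)) ℂ →ₗ[ℂ] Matrix (Fin (dA a)) (Fin (dA a)) ℂ))
    (hCP : ∀ a m, (choi (L a m)).PosSemidef)
    (hTP : ∀ a m X, (L a m X).trace = X.trace)
    (hRD : ∀ a m ρ, IsDensity ρ → L a m ρ ∈ F a)
    (ρ : Matrix ((∀ a, Fin (dM a)) × (∀ a, Fin (dA a)))
      ((∀ a, Fin (dM a)) × (∀ a, Fin (dA a))) ℂ)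
    (hρ : IsDensity ρ) :
    IsDensity (condTensor L ρ) ∧
    ∃ (k : ℕ) (t : Fin k → ℝ) (ω : Fin k → ∀ a, Matrix (Fin (dA a)) (Fin (dA a)) ℂ),
      (∑ b, t b = 1) ∧ (∀ b a, ω b a ∈ F a) ∧
      condTensor L ρ = ∑ b, t b • prodMat (ω b) := by
  have hout := isDensity_condTensor hCP hTP hρ
  have hprod : ∀ P ∈ prodMat '' Set.univ.pi F, P.IsHermitian ∧ P.trace = 1 := by
    rintro _ ⟨ω, hω, rfl⟩
    have hωD : ∀ a, IsDensity (ω a) := fun a => hFD a _ (hω a trivial)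
    exact ⟨isHermitian_prodMat fun a => (hωD a).1.1, by
      simp only [trace_prodMat, (hωD _).2, Finset.prod_const_one]⟩
  obtain ⟨k, t, σ, ht, hσ, hdecomp⟩ := exists_real_affine_combination_of_mem_span hprod
    hout.1.1 hout.2 (condTensor_mem_span hRD ρ)
  choose ω hω hσω using hσ
  exact ⟨hout, k, t, ω, ht, fun b a => hω b a trivial, by simpa only [hσω] using hdecomp⟩

/-- unbreakability of censorship for affine QRTs: if each local free set
`F a` consists of states and is affine, and each conditioned local channel `L a m` is a
channel (CP and trace preserving) mapping every state into `F a`, then the output of the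
censorship `Δ^{⊗N}` on any joint state lies in
`F(B_1…B_N) = Aff(F(B_1)⊗…⊗F(B_N)) ∩ D(B_1…B_N)`. -/
theorem censorship_unbreakable_affine {N : ℕ} {dM dA : Fin N → ℕ}
    (F : ∀ a, Set (Matrix (Fin (dA a)) (Fin (dA a)) ℂ))
    (hFD : ∀ a, ∀ σ ∈ F a, IsDensity σ)
    (haff : ∀ a, ∀ (k : ℕ) (t : Fin k → ℝ) (σ : Fin k → Matrix (Fin (dA a)) (Fin (dA a)) ℂ),
      (∀ b, σ b ∈ F a) → (∑ b, t b = 1) → IsDensity (∑ b, t b • σ b) →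
      (∑ b, t b • σ b) ∈ F a)
    (L : ∀ a, Fin (dM a) →
      (Matrix (Fin (dA a)) (Fin (dA a)) ℂ →ₗ[ℂ] Matrix (Fin (dA a)) (Fin (dA a)) ℂ))
    (hCP : ∀ a m, (choi (L a m)).PosSemidef)
    (hTP : ∀ a m X, (L a m X).trace = X.trace)
    (hRD : ∀ a m ρ, IsDensity ρ → L a m ρ ∈ F a)
    (ρ : Matrix ((∀ a, Fin (dM a)) × (∀ a, Fin (dA a)))
      ((∀ a, Fin (dM a)) × (∀ a, Fin (dA a))) ℂ)
    (hρ : IsDensity ρ) :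
    IsDensity (condTensor L ρ) ∧
    ∃ (k : ℕ) (t : Fin k → ℝ) (ω : Fin k → ∀ a, Matrix (Fin (dA a)) (Fin (dA a)) ℂ),
      (∑ b, t b = 1) ∧ (∀ b a, ω b a ∈ F a) ∧
      condTensor L ρ = ∑ b, t b • prodMat (ω b) :=
  censorship_unbreakable_affine_general F hFD L hCP hTP hRD ρ hρ
end
end

section
/- The map Δ(ρ) = ½(ρ + ρ^T), where T is transposition in a fixed orthonormal basis, is a resource-destroying map for imaginarity (Δ(ρ) is a real density matrix for all states ρ, and Δ(σ) = σ for real σ), but it is not completely positive: there exists a state ρ on C ⊗ A such that (id_C ⊗ Δ)(ρ) is not positive semidefinite. -/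
open Matrix BigOperators ComplexOrder

noncomputable section

/-- The resource-destroying map for imaginarity: `Δ(ρ) = ½(ρ + ρᵀ)`. -/
def imagRD {d : ℕ} (ρ : Matrix (Fin d) (Fin d) ℂ) : Matrix (Fin d) (Fin d) ℂ :=
  (1 / 2 : ℝ) • (ρ + ρ.transpose)

/-! `Δ` is half the sum of `ρ` and the positive matrix `ρᵀ`, and for Hermitian `ρ` the entry
`ρᵢⱼ + ρⱼᵢ = ρᵢⱼ + conj ρᵢⱼ` is real; a real Hermitian `σ` is symmetric, so `Δ σ = σ`.
Applied to the Bell state `½ (|a i⟩ + |b j⟩)(⟨a i| + ⟨b j|)`, `id ⊗ Δ` gives a matrix whose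
diagonal entry at `(a, j)` vanishes while its entry at `((b, i), (a, j))` is `¼`, which no
positive semidefinite matrix allows. -/

namespace Matrix

lemma PosSemidef.apply_eq_zero_of_diag_eq_zero {n 𝕜 : Type*} [Finite n] [RCLike 𝕜]
    {A : Matrix n n 𝕜} (hA : A.PosSemidef) {i : n} (hi : A i i = 0) (j : n) : A j i = 0 := by
  classical
  have := Fintype.ofFinite n
  have hcol : A *ᵥ Pi.single i 1 = 0 :=
    (hA.dotProduct_mulVec_zero_iff _).1 (by simpa [mulVec_single_one] using hi)
  simpa [mulVec_single_one] using congr_fun hcol j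

lemma IsHermitian.im_add_transpose_apply {n : Type*} {A : Matrix n n ℂ} (hA : A.IsHermitian)
    (i j : n) : ((A + Aᵀ) i j).im = 0 := by
  simp [← hA.apply i j]

lemma IsHermitian.transpose_eq_self_of_im_eq_zero {n : Type*} {A : Matrix n n ℂ}
    (hA : A.IsHermitian) (h : ∀ i j, (A i j).im = 0) : Aᵀ = A := by
  ext i j
  rw [transpose_apply, ← hA.apply i j]
  exact (Complex.conj_eq_iff_im.mpr (h j i)).symm

def partialTranspose {m n α : Type*} (ρ : Matrix (m × n) (m × n) α) : Matrix (m × n) (m × n) α :=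
  of fun p q => ρ (p.1, q.2) (q.1, p.2)

end Matrix

section imagRD

variable {d : ℕ} {ρ : Matrix (Fin d) (Fin d) ℂ}

lemma isDensity_imagRD (hρ : IsDensity ρ) : IsDensity (imagRD ρ) := by
  obtain ⟨hpsd, htr⟩ := hρ
  refine ⟨(hpsd.add hpsd.transpose).smul (by norm_num), ?_⟩
  rw [imagRD, trace_smul, trace_add, trace_transpose, htr]
  norm_num

lemma imagRD_im_eq_zero (hρ : ρ.IsHermitian) (i j : Fin d) : (imagRD ρ i j).im = 0 := by
  rw [imagRD, Matrix.smul_apply, Complex.smul_im, hρ.im_add_transpose_apply, smul_zero]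

lemma imagRD_eq_self (hρ : ρ.IsHermitian) (h : ∀ i j, (ρ i j).im = 0) : imagRD ρ = ρ := by
  rw [imagRD, hρ.transpose_eq_self_of_im_eq_zero h, ← two_smul ℝ ρ, smul_smul]
  norm_num

end imagRD

section bellState

variable {m n : Type*} [DecidableEq m] [DecidableEq n]

def bellVector (a b : m) (i j : n) : m × n → ℂ :=
  Pi.single (a, i) 1 + Pi.single (b, j) 1

def bellState (a b : m) (i j : n) : Matrix (m × n) (m × n) ℂ :=
  (2⁻¹ : ℝ) • vecMulVec (bellVector a b i j) (star (bellVector a b i j))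

lemma isDensity_bellState [Fintype m] [Fintype n] {a b : m} (hab : a ≠ b) (i j : n) :
    IsDensity (bellState a b i j) := by
  refine ⟨(posSemidef_vecMulVec_self_star _).smul (by norm_num), ?_⟩
  norm_num [bellState, bellVector, hab]

lemma not_posSemidef_half_add_partialTranspose_bellState [Finite m] [Finite n] {a b : m}
    {i j : n} (hab : a ≠ b) (hij : i ≠ j) :
    ¬ ((1 / 2 : ℝ) • (bellState a b i j + (bellState a b i j).partialTranspose)).PosSemidef := by
  set M := (1 / 2 : ℝ) • (bellState a b i j + (bellState a b i j).partialTranspose)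
  have hdiag : M (a, j) (a, j) = 0 := by
    simp [M, bellState, bellVector, partialTranspose, vecMulVec_apply, Pi.single_apply, hab,
      hij.symm]
  have hoff : M (b, i) (a, j) ≠ 0 := by
    simp [M, bellState, bellVector, partialTranspose, vecMulVec_apply, Pi.single_apply, hab,
      hij.symm]
  exact fun hM => hoff (hM.apply_eq_zero_of_diag_eq_zero hdiag _)

end bellState

/-- `Δ(ρ) = ½(ρ + ρᵀ)` is a resource-destroying map for imaginarity
(it outputs a real density matrix on every state and fixes real states), but it is not
completely positive: `id_C ⊗ Δ` (which is `ρ ↦ ½(ρ + ρ^{T_A})`, with the partial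
transpose on `A`) fails to preserve positivity. -/
theorem imaginarity_RD_map_not_CP {d : ℕ} (hd : 2 ≤ d) :
    (∀ ρ : Matrix (Fin d) (Fin d) ℂ, IsDensity ρ →
      IsDensity (imagRD ρ) ∧ ∀ i j, ((imagRD ρ) i j).im = 0) ∧
    (∀ σ : Matrix (Fin d) (Fin d) ℂ, IsDensity σ → (∀ i j, (σ i j).im = 0) →
      imagRD σ = σ) ∧
    (∃ (c : ℕ) (ρ : Matrix (Fin c × Fin d) (Fin c × Fin d) ℂ), IsDensity ρ ∧
      ¬ Matrix.PosSemidef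
        ((1 / 2 : ℝ) • (ρ + Matrix.of fun p q => ρ (p.1, q.2) (q.1, p.2)))) := by
  refine ⟨fun ρ hρ => ⟨isDensity_imagRD hρ, imagRD_im_eq_zero hρ.1.1⟩,
    fun σ hσ => imagRD_eq_self hσ.1.1, ?_⟩
  have hij : (⟨0, by omega⟩ : Fin d) ≠ ⟨1, by omega⟩ := by simp
  exact ⟨2, bellState 0 1 _ _, isDensity_bellState zero_ne_one _ _,
    not_posSemidef_half_add_partialTranspose_bellState zero_ne_one hij⟩
end
end
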